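/- arXiv:2403.06615 — 7 statements merged into one kernel-verified Lean document; each statement's English description precedes it below -/
import Mathlib

section
/- Let V be a linear subspace of ℝⁿ and φ : ℝⁿ → ℝ twice continuously differentiable. If for every x ∈ ℝⁿ the Hessian ∇²φ(x) maps V into V, then φ(x) + φ(0) = φ(P_V x) + φ(P_{V⊥} x) for all x ∈ ℝⁿ, where P_V and P_{V⊥} denote the orthogonal projections onto V and its orthogonal complement. -/
/-!
Write `x = a + b` with `a ∈ V` and `b ∈ Vᗮ`. The map `c ↦ ⟪∇φ c, b⟫` has derivative
`⟪∇²φ c a, b⟫ = 0` in the direction `a`, because `∇²φ c a ∈ V`; hence `Dφ (c + a) b = Dφ c b`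
for every `c`. Then `c ↦ φ (c + a) - φ c` has zero derivative in the direction `b`, so its values
at `b` and at `0` agree, which is `φ (a + b) - φ b = φ a - φ 0`.
-/

open InnerProductSpace

section NormedSpace

variable {E F : Type*} [NormedAddCommGroup E] [NormedSpace ℝ E]
  [NormedAddCommGroup F] [NormedSpace ℝ F]

theorem apply_add_eq_of_fderiv_apply_eq_zero {f : E → F} (hf : Differentiable ℝ f) {a : E}
    (h : ∀ x, fderiv ℝ f x a = 0) (x : E) : f (x + a) = f x := by
  have hline : ∀ t : ℝ, HasDerivAt (fun t : ℝ => f (x + t • a)) 0 t := fun t => by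
    simpa [h, Function.comp_def] using (hf (x + t • a)).hasFDerivAt.comp_hasDerivAt t
      (((hasDerivAt_id t).smul_const a).const_add x)
  simpa using is_const_of_deriv_eq_zero (fun t => (hline t).differentiableAt)
    (fun t => (hline t).deriv) 1 0

theorem add_add_eq_add_of_fderiv_add_apply_eq {φ : E → F} (hφ : Differentiable ℝ φ) {a b : E}
    (h : ∀ c, fderiv ℝ φ (c + a) b = fderiv ℝ φ c b) : φ (a + b) + φ 0 = φ a + φ b := by
  have hshift : Differentiable ℝ fun c => φ (c + a) := hφ.comp (differentiable_id.add_const a)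
  have hderiv : ∀ c, fderiv ℝ (fun c => φ (c + a) - φ c) c b = 0 := fun c => by
    rw [fderiv_fun_sub (hshift c) (hφ c), sub_apply, fderiv_comp_add_right, h, sub_self]
  have := apply_add_eq_of_fderiv_apply_eq_zero (f := fun c => φ (c + a) - φ c)
    (hshift.sub hφ) hderiv 0
  simp only [zero_add] at this
  rw [add_comm a b]
  exact sub_eq_sub_iff_add_eq_add.mp this

end NormedSpace

section InnerProductSpace

variable {E : Type*} [NormedAddCommGroup E] [InnerProductSpace ℝ E]

theorem ContDiff.differentiable_gradient [CompleteSpace E] {φ : E → ℝ} (hφ : ContDiff ℝ 2 φ) :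
    Differentiable ℝ (gradient φ) :=
  ((toDual ℝ E).symm.contDiff.comp (hφ.fderiv_right (m := 1) le_rfl)).differentiable one_ne_zero

theorem inner_apply_add_eq_of_fderiv_mem {G : E → E} (hG : Differentiable ℝ G)
    {V : Submodule ℝ E} (hV : ∀ x, ∀ v ∈ V, fderiv ℝ G x v ∈ V) {a b : E} (ha : a ∈ V)
    (hb : b ∈ Vᗮ) (c : E) :
    ⟪G (c + a), b⟫_ℝ = ⟪G c, b⟫_ℝ := by
  refine apply_add_eq_of_fderiv_apply_eq_zero (hG.inner ℝ (differentiable_const b)) (fun x => ?_) c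
  rw [fderiv_inner_apply ℝ (hG x) (differentiableAt_const b), fderiv_const_apply,
    zero_apply, inner_zero_right, zero_add]
  exact Submodule.inner_right_of_mem_orthogonal (hV x a ha) hb

end InnerProductSpace

/-- If `φ` is C², and the Hessian of `φ` at every point maps the subspace `V`
into `V`, then `φ(x) + φ(0) = φ(P_V x) + φ(P_{V⊥} x)` for all `x`. -/
theorem hessian_invariant_implies_splits {n : ℕ}
    (V : Submodule ℝ (EuclideanSpace ℝ (Fin n)))
    (φ : EuclideanSpace ℝ (Fin n) → ℝ)
    (hφ : ContDiff ℝ 2 φ)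
    (hHess : ∀ x : EuclideanSpace ℝ (Fin n), ∀ v ∈ V, fderiv ℝ (gradient φ) x v ∈ V) :
    ∀ x : EuclideanSpace ℝ (Fin n),
      φ x + φ 0 = φ (Submodule.orthogonalProjection V x) + φ (Submodule.orthogonalProjection Vᗮ x) := by
  intro x
  have hsplit := add_add_eq_add_of_fderiv_add_apply_eq (hφ.differentiable (by norm_num))
    (a := V.starProjection x) (b := Vᗮ.starProjection x) fun c => by
      simp only [← inner_gradient_left]
      exact inner_apply_add_eq_of_fderiv_mem hφ.differentiable_gradient hHess
        (V.starProjection_apply_mem x) (Vᗮ.starProjection_apply_mem x) c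
  rwa [V.starProjection_add_starProjection_orthogonal] at hsplit
end

section
/- Let V be a linear subspace of ℝⁿ and φ : ℝⁿ → ℝ twice differentiable. If φ(x) + φ(0) = φ(P_V x) + φ(P_{V⊥} x) for all x ∈ ℝⁿ, then for every x ∈ ℝⁿ the Hessian ∇²φ(x) maps V into V. -/
/-!
Write `P`, `Q` for the orthogonal projections onto `V` and `Vᗮ`. The splitting identity says
`φ = φ ∘ P + φ ∘ Q - φ 0`, so for `w ∈ Vᗮ` the directional derivative `y ↦ Dφ(y) w` equals
`y ↦ Dφ(Q y) w` and factors through `Q`. Differentiating it once more along `v ∈ V`, which `Q`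
kills, gives `⟪∇²φ(x) v, w⟫ = 0` for all `w ∈ Vᗮ`, i.e. `∇²φ(x) v ∈ Vᗮᗮ = V`.
-/

open MeasureTheory InnerProductSpace

theorem fderiv_apply_eq_zero_of_eq_comp {𝕜 E F G : Type*} [NontriviallyNormedField 𝕜]
    [NormedAddCommGroup E] [NormedSpace 𝕜 E] [NormedAddCommGroup F] [NormedSpace 𝕜 F]
    [NormedAddCommGroup G] [NormedSpace 𝕜 G] {f : E → G} {g : F → G} {L : E →L[𝕜] F}
    {x v : E} (hfg : f = g ∘ L) (hg : DifferentiableAt 𝕜 g (L x)) (hv : L v = 0) :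
    fderiv 𝕜 f x v = 0 := by
  rw [hfg, fderiv_comp x hg L.differentiableAt, L.fderiv, ContinuousLinearMap.comp_apply, hv,
    map_zero]

section

variable {E : Type*} [NormedAddCommGroup E] [InnerProductSpace ℝ E]

theorem fderiv_apply_of_mem_orthogonal_of_split {K : Submodule ℝ E} [K.HasOrthogonalProjection]
    {φ : E → ℝ} (hφ : Differentiable ℝ φ)
    (hsplit : ∀ x, φ x + φ 0 = φ (K.starProjection x) + φ (Kᗮ.starProjection x))
    (y : E) {w : E} (hw : w ∈ Kᗮ) :
    fderiv ℝ φ y w = fderiv ℝ φ (Kᗮ.starProjection y) w := by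
  have hderiv : HasFDerivAt φ (fderiv ℝ φ (K.starProjection y) ∘L K.starProjection +
      fderiv ℝ φ (Kᗮ.starProjection y) ∘L Kᗮ.starProjection) y :=
    ((((hφ _).hasFDerivAt.comp y K.starProjection.hasFDerivAt).add
      ((hφ _).hasFDerivAt.comp y Kᗮ.starProjection.hasFDerivAt)).sub_const (φ 0)
      ).congr_of_eventuallyEq
      (.of_forall fun x ↦ by
        simp only [Pi.add_apply, Function.comp_apply]; linarith [hsplit x])
  simp only [hderiv.fderiv, add_apply, ContinuousLinearMap.comp_apply,
    K.starProjection_apply_eq_zero_iff.mpr hw, Submodule.starProjection_eq_self_iff.mpr hw,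
    map_zero, zero_add]

theorem inner_fderiv_gradient_apply [CompleteSpace E] {φ : E → ℝ} {x : E}
    (h : DifferentiableAt ℝ (gradient φ) x) (v w : E) :
    inner ℝ (fderiv ℝ (gradient φ) x v) w = fderiv ℝ (fun y ↦ fderiv ℝ φ y w) x v := by
  have hpartial : (fun y ↦ fderiv ℝ φ y w) = fun y ↦ inner ℝ (gradient φ y) w := by
    simp only [inner_gradient_left]
  rw [hpartial, fderiv_inner_apply ℝ h (differentiableAt_const w)]
  simp

end

/-- If `φ` is twice differentiable and
`φ(x) + φ(0) = φ(P_V x) + φ(P_{V⊥} x)` for all `x`, then the Hessian of `φ` at every point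
maps `V` into `V`. -/
theorem splits_implies_hessian_invariant {n : ℕ}
    (V : Submodule ℝ (EuclideanSpace ℝ (Fin n)))
    (φ : EuclideanSpace ℝ (Fin n) → ℝ)
    (hφ : Differentiable ℝ φ) (hφ' : Differentiable ℝ (gradient φ))
    (hsplit : ∀ x : EuclideanSpace ℝ (Fin n),
      φ x + φ 0 = φ (V.orthogonalProjectionOnto x) + φ (Vᗮ.orthogonalProjectionOnto x)) :
    ∀ x : EuclideanSpace ℝ (Fin n), ∀ v ∈ V, fderiv ℝ (gradient φ) x v ∈ V := by
  intro x v hv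
  rw [← V.orthogonal_orthogonal, Submodule.mem_orthogonal']
  intro w hw
  have hfactor : (fun y ↦ fderiv ℝ φ y w) =
      (fun z ↦ inner ℝ (gradient φ z) w) ∘ Vᗮ.starProjection := by
    funext y
    simp [inner_gradient_left, fderiv_apply_of_mem_orthogonal_of_split hφ hsplit y hw]
  rw [inner_fderiv_gradient_apply (hφ' x)]
  exact fderiv_apply_eq_zero_of_eq_comp hfactor ((hφ' _).inner ℝ (differentiableAt_const w))
    (Submodule.starProjection_orthogonal_apply_eq_zero hv)
end

section
/- Let X be a random vector on ℝⁿ whose law μ splits along (E_i, E_i^⊥) for subspaces E₁,…,E_k (i.e., P_{E_i}X and P_{E_i^⊥}X are independent for each i), and suppose there is θ > 0 with max_i min{‖P_{E_i}x‖, ‖P_{E_i^⊥}x‖} ≥ θ‖x‖ for all x. Then for all t ≥ 0, P(‖X‖ ≥ t) ≤ k · (P(‖X‖ ≥ θt))². -/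
open MeasureTheory ProbabilityTheory
open scoped ENNReal

/-! If `‖X‖ ≥ t`, the hypothesis on the `E i` yields an index `i` for which both projections
`P_{E i} X` and `P_{(E i)ᗮ} X` have norm at least `θ t`. For a fixed `i` this event has
probability at most `P(‖X‖ ≥ θ t)²`: by independence it is the product of the probabilities of
the two halves, and each half forces `‖X‖ ≥ θ t` since projections do not increase the norm.
A union bound over the `k` indices concludes. -/

theorem ProbabilityTheory.IndepFun.measure_le_norm_inter_le_norm_le_sq
    {Ω E F G : Type*} [MeasurableSpace Ω] {μ : Measure Ω} [Norm E]
    [SeminormedAddCommGroup F] [MeasurableSpace F] [OpensMeasurableSpace F]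
    [SeminormedAddCommGroup G] [MeasurableSpace G] [OpensMeasurableSpace G]
    {X : Ω → E} {f : Ω → F} {g : Ω → G} (hfg : IndepFun f g μ)
    (hf : ∀ ω, ‖f ω‖ ≤ ‖X ω‖) (hg : ∀ ω, ‖g ω‖ ≤ ‖X ω‖) (r : ℝ) :
    μ {ω | r ≤ ‖f ω‖ ∧ r ≤ ‖g ω‖} ≤ μ {ω | r ≤ ‖X ω‖} ^ 2 := by
  have hF : MeasurableSet {y : F | r ≤ ‖y‖} := measurableSet_le measurable_const continuous_norm.measurable
  have hG : MeasurableSet {y : G | r ≤ ‖y‖} := measurableSet_le measurable_const continuous_norm.measurable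
  calc μ {ω | r ≤ ‖f ω‖ ∧ r ≤ ‖g ω‖}
      = μ (f ⁻¹' {y | r ≤ ‖y‖}) * μ (g ⁻¹' {y | r ≤ ‖y‖}) :=
        hfg.measure_inter_preimage_eq_mul _ _ hF hG
    _ ≤ μ {ω | r ≤ ‖X ω‖} * μ {ω | r ≤ ‖X ω‖} := by
        gcongr
        · exact fun ω hω => le_trans hω (hf ω)
        · exact fun ω hω => le_trans hω (hg ω)
    _ = μ {ω | r ≤ ‖X ω‖} ^ 2 := (sq _).symm

theorem tail_selfmajorization_of_splitting_general {n k : ℕ} {Ω : Type*} [MeasurableSpace Ω]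
    (μ : Measure Ω)
    (X : Ω → EuclideanSpace ℝ (Fin n))
    (E : Fin k → Submodule ℝ (EuclideanSpace ℝ (Fin n)))
    (hsplit : ∀ i, IndepFun
      (fun ω => (Submodule.orthogonalProjectionOnto (E i) (X ω) : EuclideanSpace ℝ (Fin n)))
      (fun ω => (Submodule.orthogonalProjectionOnto (E i)ᗮ (X ω) : EuclideanSpace ℝ (Fin n))) μ)
    (θ : ℝ) (hθ : 0 < θ)
    (hmax : ∀ x : EuclideanSpace ℝ (Fin n), ∃ i,
      θ * ‖x‖ ≤ min ‖(Submodule.orthogonalProjectionOnto (E i) x : EuclideanSpace ℝ (Fin n))‖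
                    ‖(Submodule.orthogonalProjectionOnto (E i)ᗮ x : EuclideanSpace ℝ (Fin n))‖) :
    ∀ t : ℝ, 0 ≤ t →
      μ {ω | t ≤ ‖X ω‖} ≤ (k : ℝ≥0∞) * (μ {ω | θ * t ≤ ‖X ω‖}) ^ 2 := by
  intro t _
  have hcover : {ω | t ≤ ‖X ω‖} ⊆ ⋃ i, {ω |
      θ * t ≤ ‖((E i).orthogonalProjectionOnto (X ω) : EuclideanSpace ℝ (Fin n))‖ ∧
      θ * t ≤ ‖((E i)ᗮ.orthogonalProjectionOnto (X ω) : EuclideanSpace ℝ (Fin n))‖} := by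
    intro ω hω
    obtain ⟨i, hi⟩ := hmax (X ω)
    have hθt : θ * t ≤ θ * ‖X ω‖ := mul_le_mul_of_nonneg_left hω hθ.le
    exact Set.mem_iUnion.2
      ⟨i, hθt.trans (hi.trans (min_le_left _ _)), hθt.trans (hi.trans (min_le_right _ _))⟩
  calc μ {ω | t ≤ ‖X ω‖}
      ≤ ∑ i, μ {ω |
          θ * t ≤ ‖((E i).orthogonalProjectionOnto (X ω) : EuclideanSpace ℝ (Fin n))‖ ∧
          θ * t ≤ ‖((E i)ᗮ.orthogonalProjectionOnto (X ω) : EuclideanSpace ℝ (Fin n))‖} :=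
        (measure_mono hcover).trans (measure_iUnion_fintype_le _ _)
    _ ≤ ∑ _i : Fin k, μ {ω | θ * t ≤ ‖X ω‖} ^ 2 :=
        Finset.sum_le_sum fun i _ => (hsplit i).measure_le_norm_inter_le_norm_le_sq
          (fun ω => (E i).norm_orthogonalProjectionOnto_apply_le (X ω))
          (fun ω => (E i)ᗮ.norm_orthogonalProjectionOnto_apply_le (X ω)) _
    _ = (k : ℝ≥0∞) * μ {ω | θ * t ≤ ‖X ω‖} ^ 2 := by simp

/-- If the law of `X` splits along `(E_i, E_i^⊥)` for each `i`
(the projections are independent), and `max_i min{‖P_{E_i}x‖, ‖P_{E_i^⊥}x‖} ≥ θ‖x‖`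
pointwise for some `θ > 0`, then `P(‖X‖ ≥ t) ≤ k ⬝ P(‖X‖ ≥ θt)²` for all `t ≥ 0`. -/
theorem tail_selfmajorization_of_splitting {n k : ℕ} {Ω : Type*} [MeasurableSpace Ω]
    (μ : Measure Ω) [IsProbabilityMeasure μ]
    (X : Ω → EuclideanSpace ℝ (Fin n)) (hX : Measurable X)
    (E : Fin k → Submodule ℝ (EuclideanSpace ℝ (Fin n)))
    (hsplit : ∀ i, IndepFun
      (fun ω => (Submodule.orthogonalProjectionOnto (E i) (X ω) : EuclideanSpace ℝ (Fin n)))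
      (fun ω => (Submodule.orthogonalProjectionOnto (E i)ᗮ (X ω) : EuclideanSpace ℝ (Fin n))) μ)
    (θ : ℝ) (hθ : 0 < θ)
    (hmax : ∀ x : EuclideanSpace ℝ (Fin n), ∃ i,
      θ * ‖x‖ ≤ min ‖(Submodule.orthogonalProjectionOnto (E i) x : EuclideanSpace ℝ (Fin n))‖
                    ‖(Submodule.orthogonalProjectionOnto (E i)ᗮ x : EuclideanSpace ℝ (Fin n))‖) :
    ∀ t : ℝ, 0 ≤ t →
      μ {ω | t ≤ ‖X ω‖} ≤ (k : ℝ≥0∞) * (μ {ω | θ * t ≤ ‖X ω‖}) ^ 2 :=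
  tail_selfmajorization_of_splitting_general μ X E hsplit θ hθ hmax
end

section
/- Let X be a nonnegative random variable such that there exist constants k ≥ 1 and θ ∈ (0,1] with P(X ≥ t) ≤ k · (P(X ≥ θt))² for all t ≥ 0. Then there exist finite constants M, α, β > 0 such that P(X ≥ t) ≤ M exp(−β t^α) for all t ≥ 0; in particular E[X] < ∞. -/
/-! Write `q t = P(X ≥ t)`. Tails are antitone, so the hypothesis also holds with `θ / 2` in place
of `θ`; with the scale `c = 2 / θ > 1` it reads `k q(c t) ≤ (k q(t))²`. Once `k q(s₀) ≤ e⁻¹`,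
iterating along `cⁿ s₀` gives `k q(cⁿ s₀) ≤ exp(-2ⁿ)`, and `2ⁿ = (cⁿ)^α` for `α = log_c 2`, so
`q t ≤ exp(-(t / s₀)^α / 2)` for `t ≥ s₀`. Integrability follows by the layer-cake formula. -/

open Filter MeasureTheory Real Set Topology
open scoped ENNReal

lemma apply_pow_mul_le_pow_two_pow {g : ℝ → ℝ} {c : ℝ} (hc : 0 ≤ c) (hg : ∀ t, 0 ≤ g t)
    (h : ∀ t, 0 ≤ t → g (c * t) ≤ g t ^ 2) {t : ℝ} (ht : 0 ≤ t) (n : ℕ) :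
    g (c ^ n * t) ≤ g t ^ 2 ^ n := by
  induction n with
  | zero => simp
  | succ n ih =>
    calc g (c ^ (n + 1) * t) = g (c * (c ^ n * t)) := by rw [pow_succ', mul_assoc]
      _ ≤ g (c ^ n * t) ^ 2 := h _ (by positivity)
      _ ≤ (g t ^ 2 ^ n) ^ 2 := pow_le_pow_left₀ (hg _) ih 2
      _ = g t ^ 2 ^ (n + 1) := by rw [← pow_mul, pow_succ]

lemma rpow_logb_two_lt_two_pow {c x : ℝ} (hc : 1 < c) (hx : 0 ≤ x) {n : ℕ} (h : x < c ^ n) :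
    x ^ logb c 2 < 2 ^ n := by
  have hα : 0 < logb c 2 := logb_pos hc one_lt_two
  calc x ^ logb c 2 < (c ^ n) ^ logb c 2 := rpow_lt_rpow hx h hα
    _ = (c ^ logb c 2) ^ n := (rpow_pow_comm (by positivity) _ _).symm
    _ = 2 ^ n := by rw [rpow_logb (by positivity) hc.ne' two_pos]

section SelfMajorization

variable {q : ℝ → ℝ} {k c s₀ : ℝ}

lemma le_exp_neg_rpow_logb_of_le_mul_sq (hq : Antitone q) (hq0 : ∀ t, 0 ≤ q t) (hk : 1 ≤ k)
    (hc : 1 < c) (hs₀ : 0 < s₀) (hks₀ : k * q s₀ ≤ exp (-1))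
    (hmaj : ∀ t, 0 ≤ t → q (c * t) ≤ k * q t ^ 2) {t : ℝ} (ht : s₀ ≤ t) :
    q t ≤ exp (-(t / s₀) ^ logb c 2 / 2) := by
  obtain ⟨n, hcn, hcn'⟩ := exists_nat_pow_near ((one_le_div hs₀).2 ht) hc
  have hc0 : 0 ≤ c := by linarith
  have hkq : ∀ t, 0 ≤ t → k * q (c * t) ≤ (k * q t) ^ 2 := fun t ht => by
    nlinarith [hmaj t ht]
  have iter : k * q (c ^ n * s₀) ≤ exp (-1) ^ 2 ^ n :=
    (apply_pow_mul_le_pow_two_pow (g := fun t => k * q t) (by positivity)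
      (fun t => by have := hq0 t; positivity) hkq hs₀.le n).trans
      (pow_le_pow_left₀ (by have := hq0 s₀; positivity) hks₀ _)
  have hpow := rpow_logb_two_lt_two_pow hc (div_nonneg (hs₀.le.trans ht) hs₀.le) hcn'
  calc q t ≤ q (c ^ n * s₀) := hq ((le_div_iff₀ hs₀).1 hcn)
    _ ≤ k * q (c ^ n * s₀) := le_mul_of_one_le_left (hq0 _) hk
    _ ≤ exp (-1) ^ 2 ^ n := iter
    _ = exp (-2 ^ n) := by rw [← exp_nat_mul]; push_cast; ring_nf
    _ ≤ exp (-(t / s₀) ^ logb c 2 / 2) := exp_le_exp.2 (by rw [pow_succ] at hpow; linarith)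

lemma exists_le_mul_exp_neg_rpow_of_le_mul_sq (hq : Antitone q) (hq0 : ∀ t, 0 ≤ q t)
    (hq1 : ∀ t, q t ≤ 1) (hk : 1 ≤ k) (hc : 1 < c) (hs₀ : 0 < s₀) (hks₀ : k * q s₀ ≤ exp (-1))
    (hmaj : ∀ t, 0 ≤ t → q (c * t) ≤ k * q t ^ 2) :
    ∃ M α β : ℝ, 0 < M ∧ 0 < α ∧ 0 < β ∧ ∀ t, 0 ≤ t → q t ≤ M * exp (-β * t ^ α) := by
  set α := logb c 2
  have hα : 0 < α := logb_pos hc one_lt_two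
  refine ⟨exp 1, α, 1 / (2 * s₀ ^ α), exp_pos 1, hα, by positivity, fun t ht => ?_⟩
  have hβ : 1 / (2 * s₀ ^ α) * t ^ α = (t / s₀) ^ α / 2 := by
    rw [div_rpow ht hs₀.le]; field_simp
  rw [neg_mul, hβ, ← exp_add]
  rcases le_total s₀ t with hst | hts
  · exact (le_exp_neg_rpow_logb_of_le_mul_sq hq hq0 hk hc hs₀ hks₀ hmaj hst).trans
      (exp_le_exp.2 (by linarith))
  · have : (t / s₀) ^ α ≤ 1 :=
      rpow_le_one (by positivity) ((div_le_one hs₀).2 hts) hα.le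
    exact (hq1 t).trans (one_le_exp (by linarith))

end SelfMajorization

lemma integrableOn_exp_neg_mul_rpow {b p : ℝ} (hb : 0 < b) (hp : 0 < p) :
    IntegrableOn (fun x : ℝ => exp (-b * x ^ p)) (Ioi 0) := by
  simpa using integrableOn_rpow_mul_exp_neg_mul_rpow (s := 0) (by norm_num) hp hb

section Tail

variable {Ω : Type*} [MeasurableSpace Ω] {μ : Measure Ω} {X : Ω → ℝ}

lemma tendsto_measureReal_setOf_le_atTop [IsFiniteMeasure μ] (hX : AEMeasurable X μ) :
    Tendsto (fun t => μ.real {ω | t ≤ X ω}) atTop (𝓝 0) := by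
  have hempty : ⋂ t : ℝ, {ω | t ≤ X ω} = ∅ :=
    eq_empty_of_forall_notMem fun ω hω => (lt_add_one (X ω)).not_ge (mem_iInter.1 hω _)
  have h := tendsto_measure_iInter_atTop (μ := μ) (s := fun t : ℝ => {ω | t ≤ X ω})
    (fun t => hX.nullMeasurable measurableSet_Ici) (fun s t hst ω hω => hst.trans hω)
    ⟨0, measure_ne_top μ _⟩
  rw [hempty, measure_empty] at h
  exact (ENNReal.tendsto_toReal ENNReal.zero_ne_top).comp h

lemma integrable_of_measure_setOf_le_le {f : ℝ → ℝ} (hX : AEMeasurable X μ) (hX0 : 0 ≤ᵐ[μ] X)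
    (hf : IntegrableOn f (Ioi 0))
    (htail : ∀ t, 0 < t → μ {ω | t ≤ X ω} ≤ ENNReal.ofReal (f t)) :
    Integrable X μ := by
  refine ⟨hX.aestronglyMeasurable, ?_⟩
  rw [hasFiniteIntegral_iff_ofReal hX0, lintegral_eq_lintegral_meas_le μ hX0 hX]
  exact (setLIntegral_mono' measurableSet_Ioi htail).trans_lt hf.lintegral_lt_top

end Tail

/-- If a nonnegative random variable satisfies the self-majorization
`P(X ≥ t) ≤ k ⬝ P(X ≥ θt)²` for all `t ≥ 0` (with `k ≥ 1`, `θ ∈ (0,1]`), then its tail decays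
like `M exp(−β t^α)`; in particular `E[X] < ∞`. -/
theorem tail_bound_of_selfmajorization {Ω : Type*} [MeasurableSpace Ω]
    (μ : Measure Ω) [IsProbabilityMeasure μ]
    (X : Ω → ℝ) (hX : Measurable X) (hXnonneg : ∀ ω, 0 ≤ X ω)
    (k θ : ℝ) (hk : 1 ≤ k) (hθ0 : 0 < θ) (hθ1 : θ ≤ 1)
    (hmaj : ∀ t : ℝ, 0 ≤ t →
      μ {ω | t ≤ X ω} ≤ ENNReal.ofReal k * (μ {ω | θ * t ≤ X ω}) ^ 2) :
    (∃ M α β : ℝ, 0 < M ∧ 0 < α ∧ 0 < β ∧ ∀ t : ℝ, 0 ≤ t →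
      μ {ω | t ≤ X ω} ≤ ENNReal.ofReal (M * exp (-β * t ^ α))) ∧ Integrable X μ := by
  set q : ℝ → ℝ := fun t => μ.real {ω | t ≤ X ω}
  have hq : Antitone q := fun s t hst => measureReal_mono fun ω hω => hst.trans hω
  have hq0 : ∀ t, 0 ≤ q t := fun t => measureReal_nonneg
  have hmaj' : ∀ t, 0 ≤ t → q (2 / θ * t) ≤ k * q t ^ 2 := fun t ht => by
    have h := ENNReal.toReal_mono (by finiteness) (hmaj (2 / θ * t) (by positivity))
    rw [ENNReal.toReal_mul, ENNReal.toReal_pow, ENNReal.toReal_ofReal (by linarith),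
      show θ * (2 / θ * t) = 2 * t by field_simp] at h
    exact h.trans (by gcongr; exact hq (by linarith))
  obtain ⟨s₀, hks₀, hs₀⟩ : ∃ s₀, k * q s₀ ≤ exp (-1) ∧ 0 < s₀ := by
    have h := (tendsto_measureReal_setOf_le_atTop hX.aemeasurable (μ := μ)).const_mul k
    rw [mul_zero] at h
    exact ((h.eventually (ge_mem_nhds (exp_pos _))).and (eventually_gt_atTop 0)).exists
  obtain ⟨M, α, β, hM, hα, hβ, hbound⟩ := exists_le_mul_exp_neg_rpow_of_le_mul_sq hq hq0
    (fun t => measureReal_le_one) hk (by rw [lt_div_iff₀ hθ0]; linarith) hs₀ hks₀ hmaj'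
  have htail : ∀ t, 0 ≤ t → μ {ω | t ≤ X ω} ≤ ENNReal.ofReal (M * exp (-β * t ^ α)) :=
    fun t ht => (ENNReal.le_ofReal_iff_toReal_le (by finiteness) (by positivity)).2 (hbound t ht)
  exact ⟨⟨M, α, β, hM, hα, hβ, htail⟩, integrable_of_measure_setOf_le_le hX.aemeasurable
    (ae_of_all _ hXnonneg) ((integrableOn_exp_neg_mul_rpow hβ hα).const_mul M)
    fun t ht => htail t ht.le⟩
end

section
/- Let ξ be a Borel probability measure on the space of linear subspaces of ℝⁿ, and define χ_ξ(x) = ∫ min{‖P_E x‖, ‖P_{E⊥} x‖} dξ(E). Then the zero set χ_ξ^{-1}(0) ⊂ ℝⁿ can be written as a union of mutually orthogonal linear subspaces; moreover this decomposition into nonzero mutually orthogonal subspaces is unique. -/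
/-!
Since the integrand is continuous, bounded by `‖x‖` and nonnegative, `χ_ξ x = 0` exactly when
`x ∈ E ∨ x ∈ Eᗮ` for ξ-almost every `E`. For such an `x`, the vectors `y` that a.e. follow `x`
(`y ∈ E` whenever `x ∈ E`, and `y ∈ Eᗮ` whenever `x ∈ Eᗮ`) form a subspace of the zero set
containing `x`. If some vector of the subspace generated by `x` is not orthogonal to some vector
of the one generated by `x'`, then `x` and `x'` follow each other, so the two subspaces coincide;
hence distinct ones are orthogonal.

For uniqueness, a nonzero subspace `W` covered by a pairwise orthogonal family lies in the member
`F` containing some `x ≠ 0` of `W`: a vector of `W` not orthogonal to `x` must lie in `F`, and any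
`y ∈ W` orthogonal to `x` is `(x + y) - x`.
-/

open MeasureTheory Filter
open scoped InnerProductSpace

/-- The orthogonal projection onto `E`, as a map `ℝⁿ → ℝⁿ`. -/
noncomputable def projCLM {n : ℕ} (E : Submodule ℝ (EuclideanSpace ℝ (Fin n))) :
    EuclideanSpace ℝ (Fin n) →L[ℝ] EuclideanSpace ℝ (Fin n) :=
  E.subtypeL.comp (E.orthogonalProjectionOnto)

/-- The space of linear subspaces of `ℝⁿ`, topologized so that `E ↦ P_E` is continuous
(the coarsest such topology). -/
noncomputable instance subspaceTop (n : ℕ) :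
    TopologicalSpace (Submodule ℝ (EuclideanSpace ℝ (Fin n))) :=
  TopologicalSpace.induced projCLM inferInstance

/-- The Borel σ-algebra on the space of linear subspaces of `ℝⁿ`. -/
noncomputable instance subspaceMeas (n : ℕ) :
    MeasurableSpace (Submodule ℝ (EuclideanSpace ℝ (Fin n))) := borel _

/-- `χ_ξ(x) = ∫ min{‖P_E x‖, ‖P_{E⊥} x‖} dξ(E)`. -/
noncomputable def chiXi {n : ℕ}
    (ξ : Measure (Submodule ℝ (EuclideanSpace ℝ (Fin n))))
    (x : EuclideanSpace ℝ (Fin n)) : ℝ :=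
  ∫ E, min ‖projCLM E x‖ ‖projCLM Eᗮ x‖ ∂ξ

namespace Submodule

variable {𝕜 V : Type*} [RCLike 𝕜] [NormedAddCommGroup V] [InnerProductSpace 𝕜 V]

section PairwiseOrtho

variable {S : Set (Submodule 𝕜 V)}

lemma eq_of_inner_ne_zero_of_pairwise_isOrtho (hS : S.Pairwise IsOrtho) {E F : Submodule 𝕜 V}
    (hE : E ∈ S) (hF : F ∈ S) {x y : V} (hx : x ∈ E) (hy : y ∈ F) (hxy : ⟪x, y⟫_𝕜 ≠ 0) :
    E = F :=
  by_contra fun hne => hxy ((hS hE hF hne).inner_eq hx hy)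

lemma mem_of_inner_ne_zero_of_subset_biUnion (hS : S.Pairwise IsOrtho) {W : Set V}
    (hW : W ⊆ {0} ∪ ⋃ F ∈ S, (F : Set V)) {F : Submodule 𝕜 V} (hF : F ∈ S) {x z : V}
    (hx : x ∈ F) (hz : z ∈ W) (hzx : ⟪z, x⟫_𝕜 ≠ 0) : z ∈ F := by
  rcases hW hz with rfl | hz'
  · simp at hzx
  obtain ⟨G, hG, hzG⟩ := Set.mem_iUnion₂.1 hz'
  rwa [eq_of_inner_ne_zero_of_pairwise_isOrtho hS hG hF hzG hx hzx] at hzG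

lemma exists_le_of_coe_subset_biUnion (hS : S.Pairwise IsOrtho) {W : Submodule 𝕜 V}
    (hW : W ≠ ⊥) (hcov : (W : Set V) ⊆ {0} ∪ ⋃ F ∈ S, (F : Set V)) : ∃ F ∈ S, W ≤ F := by
  obtain ⟨x, hxW, hx0⟩ := exists_mem_ne_zero_of_ne_bot hW
  obtain ⟨F, hF, hxF⟩ : ∃ F ∈ S, x ∈ F := by simpa [hx0] using hcov hxW
  have key {z : V} (hz : z ∈ W) (hzx : ⟪z, x⟫_𝕜 ≠ 0) : z ∈ F :=
    mem_of_inner_ne_zero_of_subset_biUnion hS hcov hF hxF hz hzx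
  refine ⟨F, hF, fun y hy => ?_⟩
  by_cases hyx : ⟪y, x⟫_𝕜 = 0
  · have : x + y ∈ F := key (add_mem hxW hy) (by simpa [inner_add_left, hyx] using hx0)
    simpa using sub_mem this hxF
  · exact key hy hyx

lemma eq_of_le_of_pairwise_isOrtho (hS : S.Pairwise IsOrtho) {E F : Submodule 𝕜 V}
    (hE : E ∈ S) (hF : F ∈ S) (hE₀ : E ≠ ⊥) (hEF : E ≤ F) : E = F :=
  by_contra fun hne => hE₀ (isOrtho_self.1 ((hS hE hF hne).mono_right hEF))

lemma subset_of_biUnion_eq {S₁ S₂ : Set (Submodule 𝕜 V)} (hS₁ : S₁.Pairwise IsOrtho)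
    (hS₂ : S₂.Pairwise IsOrtho) (h₁ : ∀ E ∈ S₁, E ≠ ⊥) (h₂ : ∀ E ∈ S₂, E ≠ ⊥)
    (hU : {0} ∪ ⋃ E ∈ S₁, (E : Set V) = {0} ∪ ⋃ E ∈ S₂, (E : Set V)) : S₁ ⊆ S₂ := by
  intro E hE
  obtain ⟨F, hF, hEF⟩ := exists_le_of_coe_subset_biUnion hS₂ (h₁ E hE)
    (hU ▸ fun _ hz => Or.inr (Set.mem_biUnion hE hz))
  obtain ⟨E', hE', hFE'⟩ := exists_le_of_coe_subset_biUnion hS₁ (h₂ F hF)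
    (hU ▸ fun _ hz => Or.inr (Set.mem_biUnion hF hz))
  obtain rfl := eq_of_le_of_pairwise_isOrtho hS₁ hE hE' (h₁ E hE) (hEF.trans hFE')
  rwa [le_antisymm hEF hFE']

lemma eq_of_biUnion_eq {S₁ S₂ : Set (Submodule 𝕜 V)} (hS₁ : S₁.Pairwise IsOrtho)
    (hS₂ : S₂.Pairwise IsOrtho) (h₁ : ∀ E ∈ S₁, E ≠ ⊥) (h₂ : ∀ E ∈ S₂, E ≠ ⊥)
    (hU : {0} ∪ ⋃ E ∈ S₁, (E : Set V) = {0} ∪ ⋃ E ∈ S₂, (E : Set V)) : S₁ = S₂ :=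
  (subset_of_biUnion_eq hS₁ hS₂ h₁ h₂ hU).antisymm (subset_of_biUnion_eq hS₂ hS₁ h₂ h₁ hU.symm)

end PairwiseOrtho

section Aligned

variable (l : Filter (Submodule 𝕜 V))

def splitSet : Set V := {x | ∀ᶠ E : Submodule 𝕜 V in l, x ∈ E ∨ x ∈ Eᗮ}

def alignedSubmodule (x : V) : Submodule 𝕜 V where
  carrier := {y | ∀ᶠ E : Submodule 𝕜 V in l, (x ∈ E → y ∈ E) ∧ (x ∈ Eᗮ → y ∈ Eᗮ)}
  zero_mem' := .of_forall fun E => ⟨fun _ => E.zero_mem, fun _ => Eᗮ.zero_mem⟩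
  add_mem' ha hb := by
    filter_upwards [ha, hb] with E ha hb
    exact ⟨fun h => add_mem (ha.1 h) (hb.1 h), fun h => add_mem (ha.2 h) (hb.2 h)⟩
  smul_mem' c _ hy := by
    filter_upwards [hy] with E hy
    exact ⟨fun h => smul_mem _ c (hy.1 h), fun h => smul_mem _ c (hy.2 h)⟩

variable {l}

lemma mem_alignedSubmodule_self (x : V) : x ∈ alignedSubmodule l x :=
  .of_forall fun _ => ⟨id, id⟩

lemma alignedSubmodule_le_of_mem {x y : V} (h : x ∈ alignedSubmodule l y) :
    alignedSubmodule l x ≤ alignedSubmodule l y := fun _ hz => by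
  filter_upwards [h, hz] with E h hz
  exact ⟨hz.1 ∘ h.1, hz.2 ∘ h.2⟩

lemma coe_alignedSubmodule_subset_splitSet {x : V} (hx : x ∈ splitSet l) :
    (alignedSubmodule l x : Set V) ⊆ splitSet l := fun _ hy => by
  filter_upwards [hx, hy] with E hx hy using hx.imp hy.1 hy.2

lemma mem_alignedSubmodule_of_inner_ne_zero {x x' u w : V} (hx' : x' ∈ splitSet l)
    (hu : u ∈ alignedSubmodule l x) (hw : w ∈ alignedSubmodule l x') (huw : ⟪u, w⟫_𝕜 ≠ 0) :
    x' ∈ alignedSubmodule l x := by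
  filter_upwards [hx', hu, hw] with E hx' hu hw
  constructor
  · refine fun hx => hx'.resolve_right fun h => huw ?_
    exact inner_right_of_mem_orthogonal (hu.1 hx) (hw.2 h)
  · refine fun hx => hx'.resolve_left fun h => huw ?_
    exact inner_left_of_mem_orthogonal (hw.1 h) (hu.2 hx)

lemma pairwise_isOrtho_alignedSubmodule :
    (alignedSubmodule l '' splitSet l).Pairwise IsOrtho := by
  rintro _ ⟨x, hx, rfl⟩ _ ⟨x', hx', rfl⟩ hne
  refine isOrtho_iff_inner_eq.2 fun u hu w hw => by_contra fun huw => hne ?_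
  exact (alignedSubmodule_le_of_mem
    (mem_alignedSubmodule_of_inner_ne_zero hx hw hu (mt inner_eq_zero_symm.1 huw))).antisymm
    (alignedSubmodule_le_of_mem (mem_alignedSubmodule_of_inner_ne_zero hx' hu hw huw))

lemma biUnion_alignedSubmodule :
    ⋃ W ∈ alignedSubmodule l '' splitSet l, (W : Set V) = splitSet l := by
  rw [Set.biUnion_image]
  exact (Set.iUnion₂_subset fun _ => coe_alignedSubmodule_subset_splitSet).antisymm
    fun x hx => Set.mem_biUnion hx (mem_alignedSubmodule_self x)

end Aligned

end Submodule

open Submodule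

instance subspaceBorel (n : ℕ) : BorelSpace (Submodule ℝ (EuclideanSpace ℝ (Fin n))) := ⟨rfl⟩

section ChiXi

variable {n : ℕ}

lemma projCLM_eq_starProjection (E : Submodule ℝ (EuclideanSpace ℝ (Fin n))) :
    projCLM E = E.starProjection :=
  rfl

lemma continuous_projCLM : Continuous (projCLM (n := n)) :=
  continuous_induced_dom

lemma continuous_min_norm_projCLM (x : EuclideanSpace ℝ (Fin n)) :
    Continuous fun E : Submodule ℝ (EuclideanSpace ℝ (Fin n)) =>
      min ‖projCLM E x‖ ‖projCLM Eᗮ x‖ := by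
  have hP : Continuous fun E : Submodule ℝ (EuclideanSpace ℝ (Fin n)) => projCLM E x :=
    (ContinuousLinearMap.apply ℝ _ x).continuous.comp continuous_projCLM
  simp only [projCLM_eq_starProjection, starProjection_orthogonal_val]
  exact hP.norm.min (continuous_const.sub hP).norm

lemma min_norm_projCLM_eq_zero_iff (E : Submodule ℝ (EuclideanSpace ℝ (Fin n)))
    (x : EuclideanSpace ℝ (Fin n)) :
    min ‖projCLM E x‖ ‖projCLM Eᗮ x‖ = 0 ↔ x ∈ E ∨ x ∈ Eᗮ := by
  rw [← LE.le.ge_iff_eq' (le_min (norm_nonneg _) (norm_nonneg _)), min_le_iff, norm_le_zero_iff,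
    norm_le_zero_iff, projCLM_eq_starProjection, projCLM_eq_starProjection,
    starProjection_apply_eq_zero_iff, starProjection_apply_eq_zero_iff, orthogonal_orthogonal,
    or_comm]

lemma integrable_min_norm_projCLM (ξ : Measure (Submodule ℝ (EuclideanSpace ℝ (Fin n))))
    [IsFiniteMeasure ξ] (x : EuclideanSpace ℝ (Fin n)) :
    Integrable (fun E => min ‖projCLM E x‖ ‖projCLM Eᗮ x‖) ξ := by
  refine .of_bound (continuous_min_norm_projCLM x).aestronglyMeasurable ‖x‖ (.of_forall fun E => ?_)
  rw [Real.norm_of_nonneg (le_min (norm_nonneg _) (norm_nonneg _))]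
  exact (min_le_left _ _).trans (E.norm_starProjection_apply_le x)

lemma setOf_chiXi_eq_zero (ξ : Measure (Submodule ℝ (EuclideanSpace ℝ (Fin n))))
    [IsFiniteMeasure ξ] : {x | chiXi ξ x = 0} = splitSet (ae ξ) := by
  ext x
  exact (integral_eq_zero_iff_of_nonneg (fun E => le_min (norm_nonneg _) (norm_nonneg _))
    (integrable_min_norm_projCLM ξ x)).trans
    (eventually_congr (.of_forall fun E => min_norm_projCLM_eq_zero_iff E x))

end ChiXi

/-- The zero set of `χ_ξ` is a union of mutually orthogonal linear subspaces,
and the decomposition into nonzero mutually orthogonal subspaces is unique. -/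
theorem chiXi_zeroSet_decomposition {n : ℕ}
    (ξ : Measure (Submodule ℝ (EuclideanSpace ℝ (Fin n)))) [IsProbabilityMeasure ξ] :
    (∃ S : Set (Submodule ℝ (EuclideanSpace ℝ (Fin n))),
      (S.Pairwise fun E F => E ≤ Fᗮ) ∧
      {x | chiXi ξ x = 0} = ⋃ E ∈ S, (E : Set (EuclideanSpace ℝ (Fin n)))) ∧
    (∀ S₁ S₂ : Set (Submodule ℝ (EuclideanSpace ℝ (Fin n))),
      (∀ E ∈ S₁, E ≠ ⊥) → (∀ E ∈ S₂, E ≠ ⊥) →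
      (S₁.Pairwise fun E F => E ≤ Fᗮ) → (S₂.Pairwise fun E F => E ≤ Fᗮ) →
      {x | chiXi ξ x = 0} = {0} ∪ ⋃ E ∈ S₁, (E : Set (EuclideanSpace ℝ (Fin n))) →
      {x | chiXi ξ x = 0} = {0} ∪ ⋃ E ∈ S₂, (E : Set (EuclideanSpace ℝ (Fin n))) →
      S₁ = S₂) := by
  refine ⟨⟨_, pairwise_isOrtho_alignedSubmodule,
    (setOf_chiXi_eq_zero ξ).trans biUnion_alignedSubmodule.symm⟩, ?_⟩
  intro S₁ S₂ h₁ h₂ hS₁ hS₂ hZ₁ hZ₂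
  exact eq_of_biUnion_eq hS₁ hS₂ h₁ h₂ (hZ₁.symm.trans hZ₂)
end

section
/- Let X = (X₁,…,X_n) be independent random variables, let S₁,…,S_k ⊆ {1,…,n} be such that each element of {1,…,n} lies in at most r of the S_i, and let X_{S_i} = (X_m)_{m ∈ S_i}. Then for measurable ψ_i with finite variances, Var(Σ_{i=1}^k ψ_i(X_{S_i})) ≤ r · Σ_{i=1}^k Var(ψ_i(X_{S_i})) (Madiman–Barron inequality). -/
open MeasureTheory ProbabilityTheory MeasurableSpace

/-!
Reveal the coordinates one at a time: with `ℱ t = σ(X j : j < t)`, a square-integrable `f` is the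
orthogonal sum of its martingale differences `Δₜ f = 𝔼[f | ℱ (t + 1)] - 𝔼[f | ℱ t]`, so
`Var f = ∑ₜ ‖Δₜ f‖²`. If `f` depends only on the coordinates in `S`, then `Δₜ f = 0` for `t ∉ S`,
because `X t` is independent of `ℱ t` together with those coordinates. So at every time `t` at most
`r` of the `Δₜ ψᵢ` are nonzero, and Cauchy–Schwarz gives `‖∑ᵢ Δₜ ψᵢ‖² ≤ r ∑ᵢ ‖Δₜ ψᵢ‖²`; summing
over `t` gives the inequality.
-/

lemma sq_sum_le_mul_sum_sq_of_card_filter_ne_zero_le {ι : Type*} {s : Finset ι} {g : ι → ℝ}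
    {r : ℕ} (hr : (s.filter fun i => g i ≠ 0).card ≤ r) :
    (∑ i ∈ s, g i) ^ 2 ≤ r * ∑ i ∈ s, g i ^ 2 :=
  calc (∑ i ∈ s, g i) ^ 2 = (∑ i ∈ s.filter fun i => g i ≠ 0, g i) ^ 2 := by
        rw [Finset.sum_filter_ne_zero]
    _ ≤ (s.filter fun i => g i ≠ 0).card * ∑ i ∈ s.filter fun i => g i ≠ 0, g i ^ 2 :=
        sq_sum_le_card_mul_sum_sq
    _ ≤ r * ∑ i ∈ s, g i ^ 2 := by
        gcongr
        exact Finset.filter_subset _ _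

section CondExp

variable {Ω : Type*} {mΩ : MeasurableSpace Ω} {μ : Measure Ω}

lemma integral_mul_condExp_of_stronglyMeasurable_left {m : MeasurableSpace Ω} (hm : m ≤ mΩ)
    [SigmaFinite (μ.trim hm)] {g h : Ω → ℝ} (hg : StronglyMeasurable[m] g)
    (hgh : Integrable (g * h) μ) (hh : Integrable h μ) :
    ∫ ω, g ω * μ[h | m] ω ∂μ = ∫ ω, g ω * h ω ∂μ :=
  calc ∫ ω, g ω * μ[h | m] ω ∂μ = ∫ ω, μ[g * h | m] ω ∂μ :=
        integral_congr_ae (condExp_mul_of_stronglyMeasurable_left hg hgh hh).symm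
    _ = ∫ ω, g ω * h ω ∂μ := integral_condExp hm

lemma integral_sq_finsetSum_of_pairwise_orthogonal {ι : Type*} {s : Finset ι} {g : ι → Ω → ℝ}
    (hg : ∀ i ∈ s, MemLp (g i) 2 μ)
    (horth : ∀ i ∈ s, ∀ j ∈ s, i ≠ j → ∫ ω, g i ω * g j ω ∂μ = 0) :
    ∫ ω, (∑ i ∈ s, g i ω) ^ 2 ∂μ = ∑ i ∈ s, ∫ ω, g i ω ^ 2 ∂μ := by
  have hint : ∀ i ∈ s, ∀ j ∈ s, Integrable (fun ω => g i ω * g j ω) μ :=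
    fun i hi j hj => (hg i hi).integrable_mul (hg j hj)
  calc ∫ ω, (∑ i ∈ s, g i ω) ^ 2 ∂μ = ∫ ω, ∑ i ∈ s, ∑ j ∈ s, g i ω * g j ω ∂μ := by
        simp_rw [sq, Finset.sum_mul_sum]
    _ = ∑ i ∈ s, ∑ j ∈ s, ∫ ω, g i ω * g j ω ∂μ := by
        rw [integral_finsetSum _ fun i hi => integrable_finsetSum _ (hint i hi)]
        exact Finset.sum_congr rfl fun i hi => integral_finsetSum _ (hint i hi)
    _ = ∑ i ∈ s, ∫ ω, g i ω ^ 2 ∂μ := by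
        refine Finset.sum_congr rfl fun i hi => ?_
        rw [Finset.sum_eq_single_of_mem i hi fun j hj hji => horth i hi j hj hji.symm]
        simp_rw [sq]

variable [IsFiniteMeasure μ] {m₁ m₂ : MeasurableSpace Ω}

lemma setIntegral_inter_eq_measureReal_mul_of_indep (hm₁ : m₁ ≤ mΩ) (hm₂ : m₂ ≤ mΩ)
    (hind : Indep m₂ m₁ μ) {h : Ω → ℝ} (hh : StronglyMeasurable[m₂] h) (hint : Integrable h μ)
    {s₁ s₂ : Set Ω} (hs₁ : MeasurableSet[m₁] s₁) (hs₂ : MeasurableSet[m₂] s₂) :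
    ∫ ω in s₂ ∩ s₁, h ω ∂μ = μ.real s₁ * ∫ ω in s₂, h ω ∂μ := by
  have hcond : μ[s₂.indicator h | m₁] =ᵐ[μ] fun _ => ∫ ω, s₂.indicator h ω ∂μ :=
    condExp_indep_eq hm₂ hm₁ (hh.indicator hs₂) hind
  calc ∫ ω in s₂ ∩ s₁, h ω ∂μ = ∫ ω in s₁, s₂.indicator h ω ∂μ := by
        rw [setIntegral_indicator (hm₂ _ hs₂), Set.inter_comm]
    _ = ∫ ω in s₁, μ[s₂.indicator h | m₁] ω ∂μ :=
        (setIntegral_condExp hm₁ (hint.indicator (hm₂ _ hs₂)) hs₁).symm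
    _ = μ.real s₁ * ∫ ω in s₂, h ω ∂μ := by
        rw [setIntegral_congr_ae (hm₁ _ hs₁) (hcond.mono fun ω hω _ => hω), setIntegral_const,
          integral_indicator (hm₂ _ hs₂), smul_eq_mul]

lemma IsPiSystem.image2_inter {C D : Set (Set Ω)} (hC : IsPiSystem C) (hD : IsPiSystem D) :
    IsPiSystem (Set.image2 (· ∩ ·) C D) := by
  rintro _ ⟨s₁, hs₁, s₂, hs₂, rfl⟩ _ ⟨t₁, ht₁, t₂, ht₂, rfl⟩ hne
  rw [Set.inter_inter_inter_comm] at hne ⊢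
  exact Set.mem_image2_of_mem (hC _ hs₁ _ ht₁ (hne.mono Set.inter_subset_left))
    (hD _ hs₂ _ ht₂ (hne.mono Set.inter_subset_right))

lemma sup_eq_generateFrom_image2_inter (m₁ m₂ : MeasurableSpace Ω) :
    m₁ ⊔ m₂ = generateFrom (Set.image2 (· ∩ ·) {s | MeasurableSet[m₁] s}
      {s | MeasurableSet[m₂] s}) := by
  refine le_antisymm (sup_le ?_ ?_) (generateFrom_le ?_)
  · exact fun s hs => measurableSet_generateFrom ⟨s, hs, Set.univ, .univ, Set.inter_univ s⟩
  · exact fun s hs => measurableSet_generateFrom ⟨Set.univ, .univ, s, hs, Set.univ_inter s⟩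
  · rintro _ ⟨s₁, hs₁, s₂, hs₂, rfl⟩
    exact (le_sup_left (b := m₂) _ hs₁).inter (le_sup_right (a := m₁) _ hs₂)

lemma condExp_sup_ae_eq_condExp_of_indep {mf : MeasurableSpace Ω} (hmf : mf ≤ mΩ)
    (hm₁ : m₁ ≤ mΩ) (hm₂ : m₂ ≤ mΩ) (hind : Indep (mf ⊔ m₂) m₁ μ) {f : Ω → ℝ}
    (hf : StronglyMeasurable[mf] f) : μ[f | m₂ ⊔ m₁] =ᵐ[μ] μ[f | m₂] := by
  by_cases hfi : Integrable f μ
  swap; · rw [condExp_of_not_integrable hfi, condExp_of_not_integrable hfi]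
  have hm : m₂ ⊔ m₁ ≤ mΩ := sup_le hm₂ hm₁
  have hrect : ∀ g : Ω → ℝ, StronglyMeasurable[mf ⊔ m₂] g → Integrable g μ →
      ∀ s₂ s₁, MeasurableSet[m₂] s₂ → MeasurableSet[m₁] s₁ →
        ∫ ω in s₂ ∩ s₁, g ω ∂μ = μ.real s₁ * ∫ ω in s₂, g ω ∂μ :=
    fun g hg hgi s₂ s₁ hs₂ hs₁ => setIntegral_inter_eq_measureReal_mul_of_indep hm₁
      (sup_le hmf hm₂) hind hg hgi hs₁ (le_sup_right (a := mf) _ hs₂)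
  have hset : ∀ s, MeasurableSet[m₂ ⊔ m₁] s → ∫ ω in s, μ[f | m₂] ω ∂μ = ∫ ω in s, f ω ∂μ := by
    refine induction_on_inter (sup_eq_generateFrom_image2_inter m₂ m₁)
      ((@isPiSystem_measurableSet Ω m₂).image2_inter (@isPiSystem_measurableSet Ω m₁))
      (by simp) ?_ ?_ ?_
    · rintro _ ⟨s₂, hs₂, s₁, hs₁, rfl⟩
      rw [hrect f (hf.mono le_sup_left) hfi s₂ s₁ hs₂ hs₁,
        hrect _ (stronglyMeasurable_condExp.mono le_sup_right) integrable_condExp s₂ s₁ hs₂ hs₁,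
        setIntegral_condExp hm₂ hfi hs₂]
    · intro t ht ht_eq
      have hsplit := integral_add_compl (hm _ ht) (integrable_condExp (m := m₂) (f := f) (μ := μ))
      rw [ht_eq, integral_condExp hm₂, ← integral_add_compl (hm _ ht) hfi] at hsplit
      linarith
    · intro t hdisj ht ht_eq
      rw [integral_iUnion (fun i => hm _ (ht i)) hdisj integrable_condExp.integrableOn,
        integral_iUnion (fun i => hm _ (ht i)) hdisj hfi.integrableOn]
      exact tsum_congr ht_eq
  exact (ae_eq_condExp_of_forall_setIntegral_eq hm hfi
    (fun s _ _ => integrable_condExp.integrableOn) (fun s hs _ => hset s hs)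
    ((stronglyMeasurable_condExp (m := m₂)).mono (le_sup_left (b := m₁))).aestronglyMeasurable).symm

end CondExp

section Increments

variable {Ω : Type*} {mΩ : MeasurableSpace Ω}

noncomputable def condExpIncrement (μ : Measure Ω) (ℱ : Filtration ℕ mΩ) (f : Ω → ℝ) (t : ℕ) :
    Ω → ℝ :=
  μ[f | ℱ (t + 1)] - μ[f | ℱ t]

variable {μ : Measure Ω} {ℱ : Filtration ℕ mΩ} {f g : Ω → ℝ}

lemma MeasureTheory.MemLp.condExpIncrement (hf : MemLp f 2 μ) (t : ℕ) :
    MemLp (condExpIncrement μ ℱ f t) 2 μ :=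
  (hf.condExp one_le_two).sub (hf.condExp one_le_two)

lemma stronglyMeasurable_condExpIncrement (t : ℕ) :
    StronglyMeasurable[ℱ (t + 1)] (condExpIncrement μ ℱ f t) :=
  stronglyMeasurable_condExp.sub (stronglyMeasurable_condExp.mono (ℱ.mono t.le_succ))

lemma integral_condExpIncrement_mul_of_lt [IsFiniteMeasure μ] {s t : ℕ} (hst : s < t)
    (hf : MemLp f 2 μ) (hg : MemLp g 2 μ) :
    ∫ ω, condExpIncrement μ ℱ f s ω * condExpIncrement μ ℱ g t ω ∂μ = 0 := by
  set d := condExpIncrement μ ℱ f s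
  have hd : MemLp d 2 μ := hf.condExpIncrement s
  have hdm : StronglyMeasurable[ℱ t] d := (stronglyMeasurable_condExpIncrement s).mono (ℱ.mono hst)
  have hdg : Integrable (d * g) μ := hd.integrable_mul hg
  have hgi : Integrable g μ := hg.integrable one_le_two
  have h_succ : ∫ ω, d ω * μ[g | ℱ (t + 1)] ω ∂μ = ∫ ω, d ω * g ω ∂μ :=
    integral_mul_condExp_of_stronglyMeasurable_left (ℱ.le _) (hdm.mono (ℱ.mono t.le_succ)) hdg hgi
  have h_self : ∫ ω, d ω * μ[g | ℱ t] ω ∂μ = ∫ ω, d ω * g ω ∂μ :=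
    integral_mul_condExp_of_stronglyMeasurable_left (ℱ.le _) hdm hdg hgi
  simp_rw [condExpIncrement, Pi.sub_apply, mul_sub]
  have hint : ∀ u, Integrable (fun ω => d ω * μ[g | ℱ u] ω) μ :=
    fun u => hd.integrable_mul (hg.condExp one_le_two)
  rw [integral_sub (hint _) (hint _), h_succ, h_self, sub_self]

lemma integral_condExpIncrement_mul_of_ne [IsFiniteMeasure μ] {s t : ℕ} (hst : s ≠ t)
    (hf : MemLp f 2 μ) (hg : MemLp g 2 μ) :
    ∫ ω, condExpIncrement μ ℱ f s ω * condExpIncrement μ ℱ g t ω ∂μ = 0 := by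
  rcases hst.lt_or_gt with hlt | hgt
  · exact integral_condExpIncrement_mul_of_lt hlt hf hg
  · simp_rw [mul_comm (condExpIncrement μ ℱ f s _)]
    exact integral_condExpIncrement_mul_of_lt hgt hg hf

lemma condExpIncrement_finsetSum {ι : Type*} {s : Finset ι} {f : ι → Ω → ℝ}
    (hf : ∀ i ∈ s, Integrable (f i) μ) (t : ℕ) :
    condExpIncrement μ ℱ (∑ i ∈ s, f i) t =ᵐ[μ] ∑ i ∈ s, condExpIncrement μ ℱ (f i) t := by
  simp_rw [condExpIncrement, Finset.sum_sub_distrib]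
  exact (condExp_finsetSum hf _).sub (condExp_finsetSum hf _)

theorem variance_eq_sum_integral_sq_condExpIncrement [IsProbabilityMeasure μ] (hℱ : ℱ 0 = ⊥)
    {n : ℕ} (hfm : StronglyMeasurable[ℱ n] f) (hf : MemLp f 2 μ) :
    variance f μ = ∑ t ∈ Finset.range n, ∫ ω, condExpIncrement μ ℱ f t ω ^ 2 ∂μ := by
  have htelescope : ∀ ω, ∑ t ∈ Finset.range n, condExpIncrement μ ℱ f t ω = f ω - μ[f] := by
    intro ω
    simp only [← Finset.sum_apply, condExpIncrement]
    rw [Finset.sum_range_sub (fun t => μ[f | ℱ t]),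
      condExp_of_stronglyMeasurable (ℱ.le n) hfm (hf.integrable one_le_two), hℱ, condExp_bot]
    rfl
  rw [variance_eq_integral hf.aemeasurable, ← integral_sq_finsetSum_of_pairwise_orthogonal
    (fun t _ => hf.condExpIncrement t)
    (fun s _ t _ hst => integral_condExpIncrement_mul_of_ne hst hf hf)]
  simp_rw [htelescope]

end Increments

section PrefixFiltration

variable {Ω : Type*} {mΩ : MeasurableSpace Ω} {n : ℕ} (m : Fin n → MeasurableSpace Ω)
  (hm : ∀ j, m j ≤ mΩ)

def prefixFiltration : Filtration ℕ mΩ where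
  seq t := ⨆ (j : Fin n) (_ : (j : ℕ) < t), m j
  mono' _ _ hst := biSup_mono fun _ hj => hj.trans_le hst
  le' _ := iSup₂_le fun j _ => hm j

lemma prefixFiltration_zero : prefixFiltration m hm 0 = ⊥ := by
  simp [prefixFiltration]

lemma prefixFiltration_succ (j : Fin n) :
    prefixFiltration m hm (j + 1) = prefixFiltration m hm j ⊔ m j := by
  have hset : {i : Fin n | (i : ℕ) < j + 1} = {i : Fin n | (i : ℕ) < j} ∪ {j} := by
    ext i
    simp only [Set.mem_ofPred_eq, Set.mem_union, Set.mem_singleton_iff, Nat.lt_succ_iff_lt_or_eq,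
      Fin.val_inj]
  change ⨆ i ∈ {i : Fin n | (i : ℕ) < j + 1}, m i = (⨆ i ∈ {i : Fin n | (i : ℕ) < j}, m i) ⊔ m j
  rw [hset, iSup_union, iSup_singleton]

lemma iSup₂_le_prefixFiltration (s : Set (Fin n)) : ⨆ j ∈ s, m j ≤ prefixFiltration m hm n :=
  biSup_mono fun j _ => j.isLt

variable {m hm} {μ : Measure Ω} [IsFiniteMeasure μ]

lemma condExpIncrement_prefixFiltration_ae_eq_zero (hind : iIndep m μ) {s : Set (Fin n)}
    {f : Ω → ℝ} (hf : StronglyMeasurable[⨆ j ∈ s, m j] f) {j : Fin n} (hj : j ∉ s) :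
    condExpIncrement μ (prefixFiltration m hm) f j =ᵐ[μ] 0 := by
  have hdisj : Disjoint (s ∪ {i : Fin n | (i : ℕ) < j}) {j} := by
    simp [hj]
  have hind' : Indep ((⨆ i ∈ s, m i) ⊔ prefixFiltration m hm j) (m j) μ := by
    have h := indep_iSup_of_disjoint hm hind hdisj
    rwa [iSup_union, iSup_singleton] at h
  have hcond := condExp_sup_ae_eq_condExp_of_indep (iSup₂_le fun i _ => hm i) (hm j)
    ((prefixFiltration m hm).le j) hind' hf
  rw [← prefixFiltration_succ] at hcond
  filter_upwards [hcond] with ω hω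
  simp [condExpIncrement, hω]

lemma integral_sq_sum_condExpIncrement_le {ι : Type*} [Fintype ι] (hind : iIndep m μ)
    (S : ι → Finset (Fin n)) {r : ℕ} (hcover : ∀ j, (Finset.univ.filter fun i => j ∈ S i).card ≤ r)
    {f : ι → Ω → ℝ} (hfm : ∀ i, StronglyMeasurable[⨆ j ∈ S i, m j] (f i))
    (hf : ∀ i, MemLp (f i) 2 μ) (j : Fin n) :
    ∫ ω, (∑ i, condExpIncrement μ (prefixFiltration m hm) (f i) j ω) ^ 2 ∂μ ≤
      r * ∑ i, ∫ ω, condExpIncrement μ (prefixFiltration m hm) (f i) j ω ^ 2 ∂μ := by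
  set d := fun i => condExpIncrement μ (prefixFiltration m hm) (f i) j
  have hd : ∀ i, MemLp (d i) 2 μ := fun i => (hf i).condExpIncrement j
  have hvanish : ∀ᵐ ω ∂μ, ∀ i, d i ω ≠ 0 → j ∈ S i := by
    refine ae_all_iff.2 fun i => ?_
    by_cases hji : j ∈ S i
    · exact ae_of_all _ fun _ _ => hji
    · filter_upwards [condExpIncrement_prefixFiltration_ae_eq_zero hind (hfm i) hji] with ω hω
      exact fun h => absurd hω h
  calc ∫ ω, (∑ i, d i ω) ^ 2 ∂μ ≤ ∫ ω, r * ∑ i, d i ω ^ 2 ∂μ := by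
        refine integral_mono_ae (memLp_finsetSum _ fun i _ => hd i).integrable_sq
          ((integrable_finsetSum _ fun i _ => (hd i).integrable_sq).const_mul _) ?_
        filter_upwards [hvanish] with ω hω
        exact sq_sum_le_mul_sum_sq_of_card_filter_ne_zero_le
          ((Finset.card_le_card (Finset.monotone_filter_right _ fun i _ => hω i)).trans (hcover j))
    _ = r * ∑ i, ∫ ω, d i ω ^ 2 ∂μ := by
        rw [integral_const_mul, integral_finsetSum _ fun i _ => (hd i).integrable_sq]

end PrefixFiltration

theorem variance_sum_le_of_iIndep_of_cover {Ω : Type*} {mΩ : MeasurableSpace Ω} {μ : Measure Ω}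
    [IsProbabilityMeasure μ] {n : ℕ} {m : Fin n → MeasurableSpace Ω} (hm : ∀ j, m j ≤ mΩ)
    (hind : iIndep m μ) {ι : Type*} [Fintype ι] (S : ι → Finset (Fin n)) {r : ℕ}
    (hcover : ∀ j, (Finset.univ.filter fun i => j ∈ S i).card ≤ r) {f : ι → Ω → ℝ}
    (hfm : ∀ i, StronglyMeasurable[⨆ j ∈ S i, m j] (f i))
    (hf : ∀ i, MemLp (f i) 2 μ) :
    variance (fun ω => ∑ i, f i ω) μ ≤ r * ∑ i, variance (f i) μ := by
  set ℱ := prefixFiltration m hm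
  have hfℱ : ∀ i, StronglyMeasurable[ℱ n] (f i) :=
    fun i => (hfm i).mono (iSup₂_le_prefixFiltration m hm _)
  have hvar : ∀ g : Ω → ℝ, StronglyMeasurable[ℱ n] g → MemLp g 2 μ →
      variance g μ = ∑ t ∈ Finset.range n, ∫ ω, condExpIncrement μ ℱ g t ω ^ 2 ∂μ :=
    fun g => variance_eq_sum_integral_sq_condExpIncrement (prefixFiltration_zero m hm)
  have hincr : ∀ t, condExpIncrement μ ℱ (fun ω => ∑ i, f i ω) t =ᵐ[μ]
      fun ω => ∑ i, condExpIncrement μ ℱ (f i) t ω := fun t => by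
    simpa only [← Finset.sum_fn] using
      condExpIncrement_finsetSum (fun i _ => (hf i).integrable one_le_two) t
  calc variance (fun ω => ∑ i, f i ω) μ
      = ∑ t ∈ Finset.range n, ∫ ω, (∑ i, condExpIncrement μ ℱ (f i) t ω) ^ 2 ∂μ := by
        rw [hvar _ (Finset.stronglyMeasurable_fun_sum _ fun i _ => hfℱ i)
          (memLp_finsetSum _ fun i _ => hf i)]
        exact Finset.sum_congr rfl fun t _ =>
          integral_congr_ae ((hincr t).mono fun ω hω => congrArg (· ^ 2) hω)
    _ ≤ ∑ t ∈ Finset.range n, r * ∑ i, ∫ ω, condExpIncrement μ ℱ (f i) t ω ^ 2 ∂μ :=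
        Finset.sum_le_sum fun t ht => integral_sq_sum_condExpIncrement_le hind S hcover hfm hf
          ⟨t, Finset.mem_range.1 ht⟩
    _ = r * ∑ i, variance (f i) μ := by
        rw [← Finset.mul_sum, Finset.sum_comm]
        simp_rw [hvar _ (hfℱ _) (hf _)]

lemma measurable_restrict_iSup_comap {Ω ι : Type*} {β : ι → Type*}
    [mβ : ∀ j, MeasurableSpace (β j)] (X : ∀ j, Ω → β j) (s : Finset ι) :
    Measurable[⨆ j ∈ s, (mβ j).comap (X j)] fun ω (j : {j // j ∈ s}) => X j ω := by
  let := ⨆ j ∈ s, (mβ j).comap (X j)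
  exact measurable_pi_iff.2 fun j =>
    Measurable.of_comap_le (le_iSup₂ (f := fun j (_ : j ∈ s) => (mβ j).comap (X j)) j.1 j.2)

/-- Madiman–Barron: For independent `X₁,…,X_n`, an `r`-cover `S₁,…,S_k` of
`{1,…,n}`, and square-integrable `ψᵢ` depending only on the coordinates in `Sᵢ`,
`Var(Σᵢ ψᵢ(X_{Sᵢ})) ≤ r Σᵢ Var(ψᵢ(X_{Sᵢ}))`. -/
theorem madiman_barron {n k r : ℕ} {Ω : Type*} [MeasurableSpace Ω]
    (μ : Measure Ω) [IsProbabilityMeasure μ]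
    (X : Fin n → Ω → ℝ) (hXmeas : ∀ i, Measurable (X i))
    (hindep : iIndepFun X μ)
    (S : Fin k → Finset (Fin n))
    (hcover : ∀ m : Fin n, (Finset.univ.filter fun i => m ∈ S i).card ≤ r)
    (ψ : ∀ i : Fin k, ({m : Fin n // m ∈ S i} → ℝ) → ℝ)
    (hψ : ∀ i, Measurable (ψ i))
    (hL2 : ∀ i, MemLp (fun ω => ψ i (fun m => X m.1 ω)) 2 μ) :
    variance (fun ω => ∑ i : Fin k, ψ i (fun m => X m.1 ω)) μ ≤
      (r : ℝ) * ∑ i : Fin k, variance (fun ω => ψ i (fun m => X m.1 ω)) μ := by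
  exact variance_sum_le_of_iIndep_of_cover (fun j => (hXmeas j).comap_le)
    ((iIndepFun_iff_iIndep _ _ _).1 hindep) S hcover
    (fun i => ((hψ i).comp (measurable_restrict_iSup_comap X (S i))).stronglyMeasurable) hL2
end

section
/- Let μ be a probability measure on ℝⁿ such that the function t ↦ μ({x : ‖x‖² > t}) satisfies μ({x : ‖x‖² > t}) ≤ C μ({x : ‖x‖² > ct}) for all t ≥ t₀, for some constants 0 < c, C < 1 and t₀ ≥ 0. Then ∫ log(1 + ‖x‖) dμ(x) < ∞. -/
open MeasureTheory Real
open scoped ENNReal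

/-!
Set `s = max t₀ 1` and `A k = {‖x‖² > s / cᵏ}`. Iterating the tail estimate gives `μ (A k) ≤ Cᵏ μ univ`.
A point lying in exactly `m` of the nested sets `A k` has `‖x‖² ≤ s / cᵐ`, so
`log (1 + ‖x‖) ≤ log 2 + (log s + m log c⁻¹) / 2`, i.e. `log (1 + ‖x‖)` is dominated by a constant
plus `(log c⁻¹ / 2) ∑ₖ 𝟙_{A k}`, whose integral is at most a geometric series in `C`.
-/

lemma measure_lt_div_pow_le {α : Type*} [MeasurableSpace α] {μ : Measure α} {g : α → ℝ}
    {c t₀ s : ℝ} {C : ℝ≥0∞} (hc0 : 0 < c) (hc1 : c ≤ 1) (hs0 : 0 ≤ s) (hs : t₀ ≤ s)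
    (htail : ∀ t, t₀ ≤ t → μ {x | t < g x} ≤ C * μ {x | c * t < g x}) (k : ℕ) :
    μ {x | s / c ^ k < g x} ≤ C ^ k * μ {x | s < g x} := by
  induction k with
  | zero => simp
  | succ k ih =>
    have hlevel : t₀ ≤ s / c ^ (k + 1) :=
      hs.trans (le_div_self hs0 (pow_pos hc0 _) (pow_le_one₀ hc0.le hc1))
    have hstep : c * (s / c ^ (k + 1)) = s / c ^ k := by
      field_simp
      ring
    calc μ {x | s / c ^ (k + 1) < g x} ≤ C * μ {x | s / c ^ k < g x} := by
          simpa only [hstep] using htail _ hlevel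
      _ ≤ C * (C ^ k * μ {x | s < g x}) := by gcongr
      _ = C ^ (k + 1) * μ {x | s < g x} := by rw [pow_succ', mul_assoc]

lemma log_one_add_le_of_sq_le_div_pow {s c y : ℝ} (m : ℕ) (hs : 1 ≤ s) (hc0 : 0 < c)
    (hc1 : c ≤ 1) (hy : 0 ≤ y) (hym : y ^ 2 ≤ s / c ^ m) :
    log (1 + y) ≤ log 2 + log s / 2 + m * (log c⁻¹ / 2) := by
  have hcm : 0 < c ^ m := pow_pos hc0 m
  have hu : 1 ≤ s / c ^ m := hs.trans (le_div_self (by linarith) hcm (pow_le_one₀ hc0.le hc1))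
  have hy_le : y ≤ √(s / c ^ m) := Real.le_sqrt_of_sq_le hym
  have hsqrt : 1 ≤ √(s / c ^ m) := Real.one_le_sqrt.mpr hu
  calc log (1 + y) ≤ log (2 * √(s / c ^ m)) := Real.log_le_log (by linarith) (by linarith)
    _ = log 2 + (log s + m * log c⁻¹) / 2 := by
      rw [Real.log_mul two_ne_zero (by positivity), Real.log_sqrt (by positivity),
        Real.log_div (by positivity) hcm.ne', Real.log_pow, Real.log_inv]
      ring
    _ = log 2 + log s / 2 + m * (log c⁻¹ / 2) := by ring

lemma natCast_mul_le_tsum_indicator {α : Type*} (A : ℕ → Set α) (a : ℝ≥0∞) {x : α} {m : ℕ}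
    (hm : ∀ k < m, x ∈ A k) : (m : ℝ≥0∞) * a ≤ ∑' k, (A k).indicator (fun _ => a) x :=
  calc (m : ℝ≥0∞) * a = ∑ k ∈ Finset.range m, (A k).indicator (fun _ => a) x := by
        rw [Finset.sum_congr rfl fun k hk => Set.indicator_of_mem (hm k (Finset.mem_range.mp hk)) _,
          Finset.sum_const, Finset.card_range, nsmul_eq_mul]
    _ ≤ ∑' k, (A k).indicator (fun _ => a) x := ENNReal.sum_le_tsum _

lemma ofReal_log_one_add_norm_le {E : Type*} [SeminormedAddCommGroup E] {s c : ℝ} (hs : 1 ≤ s)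
    (hc0 : 0 < c) (hc1 : c < 1) (x : E) :
    ENNReal.ofReal (log (1 + ‖x‖)) ≤ ENNReal.ofReal (log 2 + log s / 2) +
      ∑' k : ℕ, {y : E | s / c ^ k < ‖y‖ ^ 2}.indicator (fun _ => ENNReal.ofReal (log c⁻¹ / 2)) x := by
  have hex : ∃ m : ℕ, ‖x‖ ^ 2 ≤ s / c ^ m := by
    obtain ⟨m, hm⟩ := exists_pow_lt_of_lt_one
      (show 0 < s / (‖x‖ ^ 2 + 1) by positivity) hc1
    refine ⟨m, ?_⟩
    rw [lt_div_iff₀ (by positivity)] at hm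
    rw [le_div_iff₀ (pow_pos hc0 m)]
    nlinarith [pow_pos hc0 m]
  set m := Nat.find hex
  have hlower : ∀ k < m, s / c ^ k < ‖x‖ ^ 2 := fun k hk => not_le.mp (Nat.find_min hex hk)
  have hlog_c : 0 ≤ log c⁻¹ / 2 := by
    have : 0 ≤ log c⁻¹ := Real.log_nonneg (one_le_inv₀ hc0 |>.mpr hc1.le)
    positivity
  have hlog_s : 0 ≤ log 2 + log s / 2 := by
    have := Real.log_nonneg one_le_two
    have := Real.log_nonneg hs
    positivity
  calc ENNReal.ofReal (log (1 + ‖x‖))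
      ≤ ENNReal.ofReal (log 2 + log s / 2 + m * (log c⁻¹ / 2)) := ENNReal.ofReal_le_ofReal <|
        log_one_add_le_of_sq_le_div_pow m hs hc0 hc1.le (norm_nonneg x) (Nat.find_spec hex)
    _ = ENNReal.ofReal (log 2 + log s / 2) + m * ENNReal.ofReal (log c⁻¹ / 2) := by
      rw [ENNReal.ofReal_add hlog_s (by positivity), ENNReal.ofReal_mul (Nat.cast_nonneg m),
        ENNReal.ofReal_natCast]
    _ ≤ _ := by gcongr; exact natCast_mul_le_tsum_indicator _ _ hlower

theorem integrable_log_one_add_norm_of_tail {E : Type*} [SeminormedAddCommGroup E]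
    [MeasurableSpace E] [OpensMeasurableSpace E] (μ : Measure E) [IsFiniteMeasure μ]
    {c t₀ : ℝ} {C : ℝ≥0∞} (hc0 : 0 < c) (hc1 : c < 1) (hC : C < 1)
    (htail : ∀ t, t₀ ≤ t → μ {x | t < ‖x‖ ^ 2} ≤ C * μ {x | c * t < ‖x‖ ^ 2}) :
    Integrable (fun x => log (1 + ‖x‖)) μ := by
  set s := max t₀ 1
  have hs : 1 ≤ s := le_max_right _ _
  set A : ℕ → Set E := fun k => {x | s / c ^ k < ‖x‖ ^ 2}
  set a := ENNReal.ofReal (log c⁻¹ / 2)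
  set b := ENNReal.ofReal (log 2 + log s / 2)
  have hA_meas (k : ℕ) : MeasurableSet (A k) :=
    measurableSet_lt measurable_const (continuous_norm.pow 2).measurable
  have hμA (k : ℕ) : μ (A k) ≤ C ^ k * μ Set.univ :=
    (measure_lt_div_pow_le hc0 hc1.le (by linarith) (le_max_left _ _) htail k).trans
      (by gcongr; exact Set.subset_univ _)
  refine ⟨(by fun_prop : Measurable fun x : E => log (1 + ‖x‖)).aestronglyMeasurable, ?_⟩
  rw [hasFiniteIntegral_iff_ofReal (ae_of_all _ fun x => Real.log_nonneg (by simp))]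
  calc ∫⁻ x, ENNReal.ofReal (log (1 + ‖x‖)) ∂μ
      ≤ ∫⁻ x, (b + ∑' k, (A k).indicator (fun _ => a) x) ∂μ :=
        lintegral_mono (ofReal_log_one_add_norm_le hs hc0 hc1)
    _ = b * μ Set.univ + ∑' k, a * μ (A k) := by
        rw [lintegral_add_left measurable_const, lintegral_const,
          lintegral_tsum fun k => (measurable_const.indicator (hA_meas k)).aemeasurable]
        simp only [lintegral_indicator_const (hA_meas _)]
    _ ≤ b * μ Set.univ + ∑' k, a * (C ^ k * μ Set.univ) := by gcongr with k; exact hμA k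
    _ = b * μ Set.univ + a * μ Set.univ * (1 - C)⁻¹ := by
        simp only [mul_comm (C ^ _), ← mul_assoc]
        rw [ENNReal.tsum_mul_left, ENNReal.tsum_geometric]
    _ < ⊤ := by
        have : (1 - C)⁻¹ ≠ ⊤ := ENNReal.inv_ne_top.mpr (tsub_pos_of_lt hC).ne'
        finiteness

theorem log_moment_of_tail_estimate_general {n : ℕ}
    (μ : Measure (EuclideanSpace ℝ (Fin n))) [IsProbabilityMeasure μ]
    (c C t₀ : ℝ) (hc0 : 0 < c) (hc1 : c < 1) (hC1 : C < 1)
    (htail : ∀ t : ℝ, t₀ ≤ t →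
      μ {x | t < ‖x‖ ^ 2} ≤ ENNReal.ofReal C * μ {x | c * t < ‖x‖ ^ 2}) :
    Integrable (fun x => log (1 + ‖x‖)) μ :=
  integrable_log_one_add_norm_of_tail μ hc0 hc1 (ENNReal.ofReal_lt_one.mpr hC1) htail

/-- If `μ({‖x‖² > t}) ≤ C μ({‖x‖² > ct})` for all `t ≥ t₀`, with
`0 < c, C < 1`, then `∫ log(1 + ‖x‖) dμ < ∞`. -/
theorem log_moment_of_tail_estimate {n : ℕ}
    (μ : Measure (EuclideanSpace ℝ (Fin n))) [IsProbabilityMeasure μ]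
    (c C t₀ : ℝ) (hc0 : 0 < c) (hc1 : c < 1) (hC0 : 0 < C) (hC1 : C < 1) (ht₀ : 0 ≤ t₀)
    (htail : ∀ t : ℝ, t₀ ≤ t →
      μ {x | t < ‖x‖ ^ 2} ≤ ENNReal.ofReal C * μ {x | c * t < ‖x‖ ^ 2}) :
    Integrable (fun x => log (1 + ‖x‖)) μ :=
  log_moment_of_tail_estimate_general μ c C t₀ hc0 hc1 hC1 htail
end
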